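/- Let g > 0, h_L > 0, h_R > 0 and q_L, q_R ∈ ℝ, and define f(h) = f_L(h) + f_R(h) + q_R − q_L on (0, ∞), where for h_K > 0, f_K(h) = (2/3)√g (h^{3/2} − h_K^{3/2}) if h ≤ h_K and f_K(h) = √((1/2) g (h + h_K))(h − h_K) if h > h_K. Then f is continuous and strictly increasing on (0, ∞); moreover, if q_R − q_L < (2/3)√g (h_L^{3/2} + h_R^{3/2}), then f has exactly one zero h_* ∈ (0, ∞). -/

import Mathlib

/-!
Both branches of `f_K` vanish at `h = h_K`, so `f_K` is continuous, and it is strictly increasing on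
`[0, ∞)` because it is so on `[0, h_K]` (where `h ↦ h^{3/2}` increases) and on `[h_K, ∞)` (a
nondecreasing nonnegative factor times a strictly increasing one). So `f` is a continuous strictly
increasing function tending to `+∞`, and the hypothesis says exactly that `f 0 < 0`; the
intermediate value theorem then gives the zero and monotonicity its uniqueness.
-/

open Set Filter

noncomputable section

namespace ShallowWater

/-- `depthBranch g hK` is the paper's `f_K`, and `depthFunction g hL hR qL qR` its `f`. -/
def depthBranch (g hK h : ℝ) : ℝ :=
  if h ≤ hK then (2/3) * Real.sqrt g * (h ^ ((3:ℝ)/2) - hK ^ ((3:ℝ)/2))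
  else Real.sqrt ((1/2) * g * (h + hK)) * (h - hK)

def depthFunction (g hL hR qL qR h : ℝ) : ℝ :=
  depthBranch g hL h + depthBranch g hR h + qR - qL

variable {g hK : ℝ}

theorem depthBranch_of_le {h : ℝ} (h_le : h ≤ hK) :
    depthBranch g hK h = (2/3) * Real.sqrt g * (h ^ ((3:ℝ)/2) - hK ^ ((3:ℝ)/2)) :=
  if_pos h_le

theorem depthBranch_of_ge {h : ℝ} (h_ge : hK ≤ h) :
    depthBranch g hK h = Real.sqrt ((1/2) * g * (h + hK)) * (h - hK) := by
  rcases h_ge.eq_or_lt with rfl | h_lt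
  · simp [depthBranch]
  · exact if_neg h_lt.not_ge

theorem continuous_depthBranch (g hK : ℝ) : Continuous (depthBranch g hK) := by
  refine Continuous.if_le (by fun_prop (disch := norm_num)) (by fun_prop) continuous_id
    continuous_const ?_
  rintro h rfl
  simp

theorem strictMonoOn_depthBranch (hg : 0 < g) (hK_nonneg : 0 ≤ hK) :
    StrictMonoOn (depthBranch g hK) (Ici 0) := by
  rw [← Icc_union_Ici_eq_Ici hK_nonneg]
  refine StrictMonoOn.union ?_ ?_ (isGreatest_Icc hK_nonneg) isLeast_Ici
  · intro x hx y hy hxy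
    rw [depthBranch_of_le hx.2, depthBranch_of_le hy.2]
    have := Real.strictMonoOn_rpow_Ici_of_exponent_pos (by norm_num : (0:ℝ) < 3/2) hx.1 hy.1 hxy
    gcongr
  · intro x hx y hy hxy
    rw [depthBranch_of_ge hx, depthBranch_of_ge hy]
    have hy_pos : 0 < (1/2) * g * (y + hK) := by
      have : 0 < y := hK_nonneg.trans_lt (lt_of_le_of_lt hx hxy); positivity
    exact mul_lt_mul' (Real.sqrt_le_sqrt (by gcongr)) (by gcongr) (sub_nonneg.2 hx)
      (Real.sqrt_pos.2 hy_pos)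

theorem depthBranch_zero (hK_nonneg : 0 ≤ hK) :
    depthBranch g hK 0 = -((2/3) * Real.sqrt g * hK ^ ((3:ℝ)/2)) := by
  rw [depthBranch_of_le hK_nonneg, Real.zero_rpow (by norm_num)]
  ring

theorem tendsto_depthBranch_atTop (hg : 0 < g) :
    Tendsto (depthBranch g hK) atTop atTop := by
  have h_sqrt : Tendsto (fun h => Real.sqrt ((1/2) * g * (h + hK))) atTop atTop :=
    Real.tendsto_sqrt_atTop.comp <|
      (tendsto_atTop_add_const_right _ hK tendsto_id).const_mul_atTop (by positivity)
  refine (h_sqrt.atTop_mul_atTop₀ (tendsto_atTop_add_const_right _ (-hK) tendsto_id)).congr' ?_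
  filter_upwards [eventually_ge_atTop hK] with h hh
  rw [depthBranch_of_ge hh, sub_eq_add_neg]
  rfl

theorem continuous_depthFunction (g hL hR qL qR : ℝ) :
    Continuous (depthFunction g hL hR qL qR) := by
  unfold depthFunction
  have := continuous_depthBranch g hL
  have := continuous_depthBranch g hR
  fun_prop

theorem strictMonoOn_depthFunction {hL hR : ℝ} (qL qR : ℝ) (hg : 0 < g) (hL_nonneg : 0 ≤ hL)
    (hR_nonneg : 0 ≤ hR) : StrictMonoOn (depthFunction g hL hR qL qR) (Ici 0) := by
  intro x hx y hy hxy
  have hL_lt := strictMonoOn_depthBranch hg hL_nonneg hx hy hxy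
  have hR_lt := strictMonoOn_depthBranch hg hR_nonneg hx hy hxy
  unfold depthFunction
  linarith

theorem depthFunction_zero {hL hR : ℝ} (qL qR : ℝ) (hL_nonneg : 0 ≤ hL) (hR_nonneg : 0 ≤ hR) :
    depthFunction g hL hR qL qR 0 =
      qR - qL - (2/3) * Real.sqrt g * (hL ^ ((3:ℝ)/2) + hR ^ ((3:ℝ)/2)) := by
  rw [depthFunction, depthBranch_zero hL_nonneg, depthBranch_zero hR_nonneg]
  ring

theorem tendsto_depthFunction_atTop (hL hR qL qR : ℝ) (hg : 0 < g) :
    Tendsto (depthFunction g hL hR qL qR) atTop atTop := by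
  have h_sum := (tendsto_depthBranch_atTop (hK := hL) hg).atTop_add_atTop
    (tendsto_depthBranch_atTop (hK := hR) hg)
  exact tendsto_atTop_add_const_right _ (qR - qL) h_sum |>.congr fun _ =>
    (add_sub_assoc _ _ _).symm

end ShallowWater

theorem existsUnique_mem_Ioi_eq_zero {f : ℝ → ℝ} {a : ℝ} (hf : ContinuousOn f (Ici a))
    (hf_mono : StrictMonoOn f (Ioi a)) (hfa : f a < 0) (hf_top : Tendsto f atTop atTop) :
    ∃! x, x ∈ Ioi a ∧ f x = 0 := by
  obtain ⟨b, hfb, hab⟩ := ((hf_top.eventually_gt_atTop 0).and (eventually_ge_atTop a)).exists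
  obtain ⟨c, hc, hfc⟩ := intermediate_value_Ioo hab (hf.mono Icc_subset_Ici_self) ⟨hfa, hfb⟩
  exact ⟨c, ⟨hc.1, hfc⟩, fun x ⟨hx, hfx⟩ => hf_mono.injOn hx hc.1 (hfx.trans hfc.symm)⟩

open ShallowWater in
/-- The function `f(h) = f_L(h) + f_R(h) + q_R − q_L` of the exact Riemann
solver for the pressure system is continuous and strictly increasing on
`(0, ∞)`, and under the depth-positivity condition
`q_R − q_L < (2/3)√g (h_L^{3/2} + h_R^{3/2})` it has exactly one zero. -/
theorem depth_equation_unique_root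
    (g hL hR qL qR : ℝ) (hg : 0 < g) (hhL : 0 < hL) (hhR : 0 < hR) :
    let fK : ℝ → ℝ → ℝ := fun hK h =>
      if h ≤ hK then (2/3) * Real.sqrt g * (h ^ ((3:ℝ)/2) - hK ^ ((3:ℝ)/2))
      else Real.sqrt ((1/2) * g * (h + hK)) * (h - hK)
    let f : ℝ → ℝ := fun h => fK hL h + fK hR h + qR - qL
    ContinuousOn f (Set.Ioi 0) ∧
    StrictMonoOn f (Set.Ioi 0) ∧
    (qR - qL < (2/3) * Real.sqrt g * (hL ^ ((3:ℝ)/2) + hR ^ ((3:ℝ)/2)) →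
      ∃! h : ℝ, h ∈ Set.Ioi (0:ℝ) ∧ f h = 0) := by
  intro fK f
  rw [show f = depthFunction g hL hR qL qR from rfl]
  have h_cont := continuous_depthFunction g hL hR qL qR
  have h_mono := strictMonoOn_depthFunction qL qR hg hhL.le hhR.le
  refine ⟨h_cont.continuousOn, h_mono.mono Ioi_subset_Ici_self, fun h_cond => ?_⟩
  refine existsUnique_mem_Ioi_eq_zero h_cont.continuousOn (h_mono.mono Ioi_subset_Ici_self) ?_
    (tendsto_depthFunction_atTop hL hR qL qR hg)
  rw [depthFunction_zero qL qR hhL.le hhR.le]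
  linarith
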